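/- Let n ≥ 2 and 0 < δ ≤ n. There exists a constant c depending only on n such that for every open set Ω ⊆ ℝⁿ and every sequence of functions fᵢ : Ω → [0, ∞]: ∫_Ω ( Σ_{i=1}^∞ fᵢ(x) ) dH^δ_∞ ≤ c Σ_{i=1}^∞ ∫_Ω fᵢ(x) dH^δ_∞. -/

import Mathlib

open MeasureTheory Metric Set Bornology
open scoped ENNReal NNReal

/-- The `δ`-dimensional Hausdorff content of a set `E ⊆ ℝⁿ`, defined as the infimum of
`∑ᵢ rᵢ^δ` over all countable coverings of `E` by open balls `B(xᵢ, rᵢ)`. -/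
noncomputable def hContent (n : ℕ) (δ : ℝ) (E : Set (EuclideanSpace ℝ (Fin n))) : ℝ≥0∞ :=
  ⨅ (x : ℕ → EuclideanSpace ℝ (Fin n)) (r : ℕ → ℝ≥0)
    (_ : E ⊆ ⋃ i, Metric.ball (x i) (r i)), ∑' i, (r i : ℝ≥0∞) ^ δ

/-- The `δ`-dimensional Hausdorff measure of `E ⊆ ℝⁿ`, obtained from coverings by open balls of
radii at most `ρ`, in the limit `ρ → 0⁺` (equivalently: the supremum over `ρ > 0`, since the
infima increase as `ρ` decreases). -/
noncomputable def hMeasure (n : ℕ) (δ : ℝ) (E : Set (EuclideanSpace ℝ (Fin n))) : ℝ≥0∞ :=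
  ⨆ (ρ : ℝ≥0) (_ : 0 < ρ),
    ⨅ (x : ℕ → EuclideanSpace ℝ (Fin n)) (r : ℕ → ℝ≥0)
      (_ : E ⊆ ⋃ i, Metric.ball (x i) (r i)) (_ : ∀ i, r i ≤ ρ), ∑' i, (r i : ℝ≥0∞) ^ δ

/-- The Choquet integral `∫_Ω f dH^δ_∞ = ∫₀^∞ H^δ_∞({x ∈ Ω : f x > t}) dt` of a
(nonnegative) real-valued function with respect to the Hausdorff content. -/
noncomputable def choquet (n : ℕ) (δ : ℝ) (Ω : Set (EuclideanSpace ℝ (Fin n)))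
    (f : EuclideanSpace ℝ (Fin n) → ℝ) : ℝ≥0∞ :=
  ∫⁻ t in Set.Ioi (0 : ℝ), hContent n δ {x ∈ Ω | t < f x}

/-- The Choquet integral of an `[0,∞]`-valued function with respect to the Hausdorff content. -/
noncomputable def echoquet (n : ℕ) (δ : ℝ) (Ω : Set (EuclideanSpace ℝ (Fin n)))
    (f : EuclideanSpace ℝ (Fin n) → ℝ≥0∞) : ℝ≥0∞ :=
  ∫⁻ t in Set.Ioi (0 : ℝ), hContent n δ {x ∈ Ω | ENNReal.ofReal t < f x}

/-- The centered fractional Hardy–Littlewood maximal function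
`M_κ f (x) = sup_{r>0} r^{κ-n} ∫_{B(x,r)} |f|`. -/
noncomputable def fracMaximal (n : ℕ) (κ : ℝ) (f : EuclideanSpace ℝ (Fin n) → ℝ)
    (x : EuclideanSpace ℝ (Fin n)) : ℝ≥0∞ :=
  ⨆ (r : ℝ) (_ : 0 < r),
    ENNReal.ofReal (r ^ (κ - n)) * ∫⁻ y in Metric.ball x r, ENNReal.ofReal |f y|

/-- The Riesz potential of order `1`: `I₁ f (x) = ∫_{ℝⁿ} |f y| / |x-y|^{n-1} dy`. -/
noncomputable def rieszPot (n : ℕ) (f : EuclideanSpace ℝ (Fin n) → ℝ)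
    (x : EuclideanSpace ℝ (Fin n)) : ℝ≥0∞ :=
  ∫⁻ y, ENNReal.ofReal |f y| / edist x y ^ ((n : ℝ) - 1)

/-- `Ω` is an `(α, β)`-John domain with John center `x₀`: every `x ∈ Ω` can be joined to `x₀`
by a rectifiable curve `γ : [0, L] → Ω` parametrized by arclength (hence `1`-Lipschitz) with
`γ 0 = x`, `γ L = x₀`, `L ≤ β` and `dist (γ t, ∂Ω) ≥ (α/β) t`. -/
def IsJohnDomainWithCenter (n : ℕ) (α β : ℝ) (Ω : Set (EuclideanSpace ℝ (Fin n)))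
    (x₀ : EuclideanSpace ℝ (Fin n)) : Prop :=
  x₀ ∈ Ω ∧ ∀ x ∈ Ω, ∃ L : ℝ, 0 ≤ L ∧ L ≤ β ∧ ∃ γ : ℝ → EuclideanSpace ℝ (Fin n),
    γ 0 = x ∧ γ L = x₀ ∧ (∀ t ∈ Set.Icc 0 L, γ t ∈ Ω) ∧
    LipschitzOnWith 1 γ (Set.Icc 0 L) ∧
    ∀ t ∈ Set.Icc 0 L, α / β * t ≤ Metric.infDist (γ t) (frontier Ω)

/-- `Ω` is an `(α, β)`-John domain. -/
def IsJohnDomain (n : ℕ) (α β : ℝ) (Ω : Set (EuclideanSpace ℝ (Fin n))) : Prop :=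
  ∃ x₀, IsJohnDomainWithCenter n α β Ω x₀


/-!
Split each `fᵢ` dyadically, `fᵢ ≤ ∑ₖ 2^(k+2) 1{fᵢ > 2^(k+1)}`, and cover each level set by balls
almost realising its content. Since `∑ₖ 2^k H^δ_∞{f > 2^(k+1)} ≤ ∫ f dH^δ_∞`, this dominates
`∑ᵢ fᵢ` by a weighted sum of balls `∑ⱼ wⱼ 1_{B(cⱼ, rⱼ)}` with `∑ⱼ wⱼ rⱼ^δ ≤ 4 ∑ᵢ ∫ fᵢ dH^δ_∞ + ε`,
so it suffices to bound the Choquet integral of such a sum by `C(n) ∑ⱼ wⱼ rⱼ^δ`.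

Each ball lies in `3ⁿ` dyadic cubes of comparable side, which reduces this to sums
`g = ∑ᵢ wᵢ 1_{Qᵢ}` over dyadic cubes. For those we stop at maximal cubes: `{g > t}` is covered by
the maximal dyadic cubes `Q` for which the weights of the cubes containing `Q` add up to more
than `t`. A fixed cube `Q` is such a maximal cube exactly for `t` in an interval whose length is
the weight carried by `Q` itself, so integrating over `t` gives
`∫ H^δ_∞{g > t} dt ≤ n^δ ∑ᵢ wᵢ ℓ(Qᵢ)^δ`.
-/

lemma Antitone.exists_le_lt_of_exists {α : Type*} [LinearOrder α] {s : ℤ → α} (hs : Antitone s)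
    {a : α} (hlt : ∃ k, a < s k) (hle : ∃ k, s k ≤ a) : ∃ k, s (k + 1) ≤ a ∧ a < s k := by
  obtain ⟨k₀, hk₀⟩ := hle
  have hbdd : ∃ b, ∀ k, a < s k → k ≤ b :=
    ⟨k₀, fun k hk => le_of_not_gt fun hlt => (hk₀.trans_lt hk).not_ge (hs hlt.le)⟩
  obtain ⟨k, hk, hmax⟩ := Int.exists_greatest_of_bdd hbdd hlt
  exact ⟨k, le_of_not_gt fun h => (hmax _ h).not_gt (lt_add_one k), hk⟩

lemma volume_ofReal_preimage_Ico_inter_Ioi_le (a b : ℝ≥0∞) :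
    volume (ENNReal.ofReal ⁻¹' Ico a b ∩ Ioi 0) ≤ b - a := by
  rcases eq_or_ne a ⊤ with rfl | ha
  · simp
  rcases eq_or_ne b ⊤ with rfl | hb
  · simp [ENNReal.top_sub ha]
  have hsub : ENNReal.ofReal ⁻¹' Ico a b ∩ Ioi 0 ⊆ Ico a.toReal b.toReal :=
    fun t ⟨⟨hat, htb⟩, ht⟩ => ⟨(ENNReal.le_ofReal_iff_toReal_le ha (le_of_lt ht)).1 hat,
      (ENNReal.ofReal_lt_iff_lt_toReal (le_of_lt ht) hb).1 htb⟩
  calc volume (ENNReal.ofReal ⁻¹' Ico a b ∩ Ioi 0) ≤ volume (Ico a.toReal b.toReal) :=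
        measure_mono hsub
    _ = b - a := by
        rw [Real.volume_Ico, ENNReal.ofReal_sub _ ENNReal.toReal_nonneg,
          ENNReal.ofReal_toReal ha, ENNReal.ofReal_toReal hb]

section HausdorffContent

variable {n : ℕ} {δ : ℝ}

lemma hContent_mono {E F : Set (EuclideanSpace ℝ (Fin n))} (h : E ⊆ F) :
    hContent n δ E ≤ hContent n δ F :=
  iInf_mono fun _ => iInf_mono fun _ => iInf_mono' fun hF => ⟨h.trans hF, le_rfl⟩

lemma hContent_le_tsum_of_subset_iUnion_ball (hδ : 0 < δ) {ι : Type*} [Countable ι]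
    {E : Set (EuclideanSpace ℝ (Fin n))} (c : ι → EuclideanSpace ℝ (Fin n)) (r : ι → ℝ≥0)
    (hE : E ⊆ ⋃ i, ball (c i) (r i)) :
    hContent n δ E ≤ ∑' i, (r i : ℝ≥0∞) ^ δ := by
  obtain ⟨e, he⟩ := exists_injective_nat ι
  set c' : ℕ → EuclideanSpace ℝ (Fin n) := Function.extend e c 0
  set r' : ℕ → ℝ≥0 := Function.extend e r 0
  have hcov : E ⊆ ⋃ m, ball (c' m) (r' m) := by
    refine hE.trans (iUnion_subset fun i => ?_)
    rw [← he.extend_apply c 0 i, ← he.extend_apply r 0 i]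
    exact subset_iUnion_of_subset (e i) subset_rfl
  have hpow : (fun m => (r' m : ℝ≥0∞) ^ δ) = Function.extend e (fun i => (r i : ℝ≥0∞) ^ δ) 0 := by
    ext m
    rw [Function.apply_extend (fun s : ℝ≥0 => (s : ℝ≥0∞) ^ δ)]
    congr 1
    ext
    simp [ENNReal.zero_rpow_of_pos hδ]
  calc hContent n δ E ≤ ∑' m, (r' m : ℝ≥0∞) ^ δ := iInf₂_le_of_le c' r' (iInf_le _ hcov)
    _ = ∑' i, (r i : ℝ≥0∞) ^ δ := by rw [hpow, tsum_extend_zero he]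

lemma exists_tsum_rpow_lt_of_hContent_lt {E : Set (EuclideanSpace ℝ (Fin n))} {B : ℝ≥0∞}
    (h : hContent n δ E < B) :
    ∃ (c : ℕ → EuclideanSpace ℝ (Fin n)) (r : ℕ → ℝ≥0),
      E ⊆ ⋃ i, ball (c i) (r i) ∧ ∑' i, (r i : ℝ≥0∞) ^ δ < B := by
  simpa only [hContent, iInf_lt_iff, exists_prop] using h

lemma echoquet_mono {Ω Ω' : Set (EuclideanSpace ℝ (Fin n))} {f g : EuclideanSpace ℝ (Fin n) → ℝ≥0∞}
    (hΩ : Ω ⊆ Ω') (hfg : ∀ x ∈ Ω, f x ≤ g x) : echoquet n δ Ω f ≤ echoquet n δ Ω' g :=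
  lintegral_mono fun _ => hContent_mono fun x hx => ⟨hΩ hx.1, hx.2.trans_le (hfg x hx.1)⟩

end HausdorffContent

section Dyadic

variable {n : ℕ}

noncomputable def dyadicIndex (k : ℤ) (x : EuclideanSpace ℝ (Fin n)) : Fin n → ℤ :=
  fun i => ⌊x i / 2 ^ k⌋

noncomputable def dyadicCorner (k : ℤ) (m : Fin n → ℤ) : EuclideanSpace ℝ (Fin n) :=
  WithLp.toLp 2 fun i => m i * 2 ^ k

lemma dyadicIndex_dyadicCorner (k : ℤ) (m : Fin n → ℤ) :
    dyadicIndex k (dyadicCorner k m) = m := by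
  funext i
  simp only [dyadicIndex, dyadicCorner, PiLp.toLp_apply]
  rw [mul_div_cancel_right₀ _ (zpow_ne_zero k two_ne_zero), Int.floor_intCast]

lemma dyadicIndex_add_natCast (j : ℤ) (p : ℕ) (x : EuclideanSpace ℝ (Fin n)) :
    dyadicIndex (j + p) x = fun i => dyadicIndex j x i / 2 ^ p := by
  funext i
  have h := Int.floor_div_natCast (x i / 2 ^ j) (2 ^ p)
  push_cast at h
  rw [dyadicIndex, dyadicIndex, ← h, zpow_add₀ two_ne_zero, div_mul_eq_div_div, zpow_natCast]

lemma dyadicIndex_eq_of_le {j k : ℤ} (hjk : j ≤ k) {x y : EuclideanSpace ℝ (Fin n)}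
    (h : dyadicIndex j x = dyadicIndex j y) : dyadicIndex k x = dyadicIndex k y := by
  obtain ⟨p, rfl⟩ := Int.le.dest hjk
  rw [dyadicIndex_add_natCast, dyadicIndex_add_natCast, h]

lemma dist_dyadicCorner_apply_lt (k : ℤ) (x : EuclideanSpace ℝ (Fin n)) (i : Fin n) :
    dist (x i) (dyadicCorner k (dyadicIndex k x) i) < 2 ^ k := by
  have h2k : (0 : ℝ) < 2 ^ k := zpow_pos two_pos k
  have hfract : x i - dyadicCorner k (dyadicIndex k x) i = Int.fract (x i / 2 ^ k) * 2 ^ k := by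
    rw [Int.fract, sub_mul, div_mul_cancel₀ _ h2k.ne']
    rfl
  rw [Real.dist_eq, hfract, abs_of_nonneg (by positivity)]
  exact mul_lt_of_lt_one_left h2k (Int.fract_lt_one _)

lemma dist_dyadicCorner_lt (hn : n ≠ 0) (k : ℤ) (x : EuclideanSpace ℝ (Fin n)) :
    dist x (dyadicCorner k (dyadicIndex k x)) < n * 2 ^ k := by
  have : Nonempty (Fin n) := ⟨⟨0, Nat.pos_of_ne_zero hn⟩⟩
  have hn1 : (1 : ℝ) ≤ n := by exact_mod_cast Nat.one_le_iff_ne_zero.2 hn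
  rw [EuclideanSpace.dist_eq, Real.sqrt_lt' (by positivity)]
  calc ∑ i, dist (x i) (dyadicCorner k (dyadicIndex k x) i) ^ 2
      < ∑ _i : Fin n, ((2 : ℝ) ^ k) ^ 2 :=
        Finset.sum_lt_sum_of_nonempty Finset.univ_nonempty fun i _ =>
          pow_lt_pow_left₀ (dist_dyadicCorner_apply_lt k x i) dist_nonneg two_ne_zero
    _ = n * ((2 : ℝ) ^ k) ^ 2 := by simp
    _ ≤ (n * 2 ^ k) ^ 2 := by nlinarith [sq_nonneg ((2 : ℝ) ^ k)]

lemma floor_sub_floor_mem_Icc {a b : ℝ} (h : |a - b| < 1) : ⌊a⌋ - ⌊b⌋ ∈ Icc (-1 : ℤ) 1 := by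
  rw [abs_sub_lt_iff] at h
  have h₁ : ⌊a⌋ ≤ ⌊b⌋ + 1 := by
    rw [← Int.floor_add_one]; exact Int.floor_le_floor (by linarith)
  have h₂ : ⌊b⌋ ≤ ⌊a⌋ + 1 := by
    rw [← Int.floor_add_one]; exact Int.floor_le_floor (by linarith)
  constructor <;> omega

lemma exists_dyadicIndex_eq_of_dist_lt {k : ℤ} {x y : EuclideanSpace ℝ (Fin n)}
    (h : dist x y < 2 ^ k) :
    ∃ j : Fin n → Fin 3, dyadicIndex k x = dyadicIndex k y + fun i => (j i : ℤ) - 1 := by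
  have h2k : (0 : ℝ) < 2 ^ k := zpow_pos two_pos k
  have hmem : ∀ i, dyadicIndex k x i - dyadicIndex k y i ∈ Icc (-1 : ℤ) 1 := fun i => by
    refine floor_sub_floor_mem_Icc ?_
    rw [← sub_div, abs_div, abs_of_pos h2k, div_lt_one h2k, ← Real.dist_eq]
    exact (PiLp.dist_apply_le x y i).trans_lt h
  refine ⟨fun i => ⟨(dyadicIndex k x i - dyadicIndex k y i + 1).toNat, by grind⟩, ?_⟩
  funext i
  obtain ⟨h₁, h₂⟩ := hmem i
  simp only [Pi.add_apply]
  omega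

end Dyadic

section DyadicSum

variable {n : ℕ} {δ : ℝ} {ι : Type*} (K : ι → ℤ) (M : ι → Fin n → ℤ) (w : ι → ℝ≥0∞)

/-- `dyadicSum K M w = ∑ᵢ wᵢ 1_{Qᵢ}`, where `Qᵢ` is the dyadic cube of side `2 ^ K i` with index
`M i`; `dyadicSumFrom K M w k` keeps only the cubes of side at least `2 ^ k`. -/
noncomputable def dyadicSum (x : EuclideanSpace ℝ (Fin n)) : ℝ≥0∞ :=
  ∑' i, if dyadicIndex (K i) x = M i then w i else 0

noncomputable def dyadicSumFrom (k : ℤ) (x : EuclideanSpace ℝ (Fin n)) : ℝ≥0∞ :=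
  ∑' i, if k ≤ K i ∧ dyadicIndex (K i) x = M i then w i else 0

lemma dyadicSumFrom_antitone (x : EuclideanSpace ℝ (Fin n)) :
    Antitone fun k => dyadicSumFrom K M w k x := fun _ _ hkl =>
  ENNReal.tsum_le_tsum fun i => by
    split_ifs with h₁ h₂
    exacts [le_rfl, absurd ⟨hkl.trans h₁.1, h₁.2⟩ h₂, zero_le, le_rfl]

lemma exists_lt_dyadicSumFrom {a : ℝ≥0∞} {x : EuclideanSpace ℝ (Fin n)}
    (h : a < dyadicSum K M w x) : ∃ k, a < dyadicSumFrom K M w k x := by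
  rw [dyadicSum, ENNReal.tsum_eq_iSup_sum, lt_iSup_iff] at h
  obtain ⟨s, hs⟩ := h
  obtain ⟨k, hk⟩ := (s.image K).bddBelow
  refine ⟨k, hs.trans_le ((Finset.sum_le_sum fun i hi => ?_).trans (ENNReal.sum_le_tsum s))⟩
  split_ifs with h₁ h₂
  exacts [le_rfl, absurd ⟨hk (Finset.mem_coe.2 (Finset.mem_image_of_mem K hi)), h₁⟩ h₂, zero_le,
    le_rfl]

lemma rpow_two_zpow_mul_dyadicSumFrom_le (hδ : 0 ≤ δ) (k : ℤ) (x : EuclideanSpace ℝ (Fin n)) :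
    ((2 : ℝ≥0∞) ^ k) ^ δ * dyadicSumFrom K M w k x ≤ ∑' i, w i * ((2 : ℝ≥0∞) ^ K i) ^ δ := by
  rw [dyadicSumFrom, ← ENNReal.tsum_mul_left]
  refine ENNReal.tsum_le_tsum fun i => ?_
  split_ifs with h
  · rw [mul_comm]
    gcongr
    · norm_num
    · exact h.1
  · simp

lemma exists_dyadicSumFrom_le (hδ : 0 < δ) (hA : ∑' i, w i * ((2 : ℝ≥0∞) ^ K i) ^ δ ≠ ⊤)
    {a : ℝ≥0∞} (ha : a ≠ 0) (x : EuclideanSpace ℝ (Fin n)) : ∃ k, dyadicSumFrom K M w k x ≤ a := by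
  have hlim : Filter.Tendsto (fun k : ℤ => ((2 : ℝ≥0∞) ^ k) ^ δ) Filter.atTop (nhds ⊤) := by
    simp_rw [← ENNReal.rpow_intCast, ← ENNReal.rpow_mul]
    exact (ENNReal.tendsto_rpow_atTop_of_one_lt_base ENNReal.one_lt_two).comp
      (tendsto_intCast_atTop_atTop.atTop_mul_const hδ)
  obtain ⟨k, hk⟩ := (hlim.eventually (lt_mem_nhds (ENNReal.div_lt_top hA ha))).exists
  refine ⟨k, le_of_not_gt fun hlt => ?_⟩
  rw [ENNReal.div_lt_iff (Or.inl ha) (Or.inr hA)] at hk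
  exact (hk.trans_le (by gcongr)).not_ge (rpow_two_zpow_mul_dyadicSumFrom_le K M w hδ.le k x)

lemma dyadicSumFrom_congr {k : ℤ} {x y : EuclideanSpace ℝ (Fin n)}
    (h : dyadicIndex k x = dyadicIndex k y) :
    dyadicSumFrom K M w k x = dyadicSumFrom K M w k y :=
  tsum_congr fun i => if_congr (and_congr_right fun hk => by rw [dyadicIndex_eq_of_le hk h]) rfl rfl

lemma dyadicSumFrom_eq_add (k : ℤ) (x : EuclideanSpace ℝ (Fin n)) :
    dyadicSumFrom K M w k x = dyadicSumFrom K M w (k + 1) x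
      + ∑' i, if (K i, M i) = (k, dyadicIndex k x) then w i else 0 := by
  rw [dyadicSumFrom, dyadicSumFrom, ← ENNReal.tsum_add]
  refine tsum_congr fun i => ?_
  rcases lt_trichotomy (K i) k with hK | rfl | hK
  · simp [hK.not_ge, (hK.trans (lt_add_one k)).not_ge, hK.ne]
  · simp [eq_comm]
  · simp [hK.le, Int.add_one_le_iff.2 hK, hK.ne']

/-- The levels `t` for which the dyadic cube of side `2 ^ k` and index `m` is maximal among the
cubes `Q` such that the cubes containing `Q` carry total weight greater than `t`. -/
def dyadicLayer (k : ℤ) (m : Fin n → ℤ) : Set ℝ :=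
  ENNReal.ofReal ⁻¹' Ico (dyadicSumFrom K M w (k + 1) (dyadicCorner k m))
    (dyadicSumFrom K M w k (dyadicCorner k m))

lemma measurableSet_dyadicLayer (k : ℤ) (m : Fin n → ℤ) : MeasurableSet (dyadicLayer K M w k m) :=
  ENNReal.measurable_ofReal measurableSet_Ico

lemma volume_dyadicLayer_inter_Ioi_le (k : ℤ) (m : Fin n → ℤ) :
    volume (dyadicLayer K M w k m ∩ Ioi 0) ≤ ∑' i, if (K i, M i) = (k, m) then w i else 0 := by
  refine (volume_ofReal_preimage_Ico_inter_Ioi_le _ _).trans ?_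
  rw [dyadicSumFrom_eq_add K M w k, dyadicIndex_dyadicCorner]
  exact tsub_le_iff_left.2 le_rfl

lemma hContent_setOf_lt_dyadicSum_le (hn : n ≠ 0) (hδ : 0 < δ) [Countable ι]
    (hA : ∑' i, w i * ((2 : ℝ≥0∞) ^ K i) ^ δ ≠ ⊤) {t : ℝ} (ht : 0 < t) :
    hContent n δ {x | ENNReal.ofReal t < dyadicSum K M w x}
      ≤ ∑' km : ℤ × (Fin n → ℤ), (dyadicLayer K M w km.1 km.2).indicator
          (fun _ => (((n : ℝ≥0) * 2 ^ km.1 : ℝ≥0) : ℝ≥0∞) ^ δ) t := by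
  let r : ℤ × (Fin n → ℤ) → ℝ≥0 := fun km =>
    (dyadicLayer K M w km.1 km.2).indicator (fun _ => (n : ℝ≥0) * 2 ^ km.1) t
  have hcov : {x | ENNReal.ofReal t < dyadicSum K M w x}
      ⊆ ⋃ km, ball (dyadicCorner km.1 km.2) (r km) := fun x hx => by
    -- the largest side `2 ^ k` at which the cubes containing `x` carry weight greater than `t`
    obtain ⟨k, hk₁, hk₂⟩ := (dyadicSumFrom_antitone K M w x).exists_le_lt_of_exists
      (exists_lt_dyadicSumFrom K M w hx)
      (exists_dyadicSumFrom_le K M w hδ hA (ENNReal.ofReal_pos.2 ht).ne' x)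
    have hm := (dyadicIndex_dyadicCorner k (dyadicIndex k x)).symm
    have hlayer : t ∈ dyadicLayer K M w k (dyadicIndex k x) :=
      ⟨(dyadicSumFrom_congr K M w (dyadicIndex_eq_of_le (lt_add_one k).le hm)).symm ▸ hk₁,
        (dyadicSumFrom_congr K M w hm).symm ▸ hk₂⟩
    refine mem_iUnion.2 ⟨(k, dyadicIndex k x), mem_ball.2 ?_⟩
    simpa [r, hlayer] using dist_dyadicCorner_lt hn k x
  refine (hContent_le_tsum_of_subset_iUnion_ball hδ _ r hcov).trans_eq (tsum_congr fun km => ?_)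
  by_cases h : t ∈ dyadicLayer K M w km.1 km.2
  · simp [r, h]
  · simp [r, h, ENNReal.zero_rpow_of_pos hδ]

theorem echoquet_univ_dyadicSum_le (hn : n ≠ 0) (hδ : 0 < δ) [Countable ι] :
    echoquet n δ univ (dyadicSum K M w)
      ≤ (n : ℝ≥0∞) ^ δ * ∑' i, w i * ((2 : ℝ≥0∞) ^ K i) ^ δ := by
  set A := ∑' i, w i * ((2 : ℝ≥0∞) ^ K i) ^ δ
  rcases eq_or_ne A ⊤ with hA | hA
  · rw [hA, ENNReal.mul_top (by positivity)]
    exact le_top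
  let c : ℤ × (Fin n → ℤ) → ℝ≥0∞ := fun km => (((n : ℝ≥0) * 2 ^ km.1 : ℝ≥0) : ℝ≥0∞) ^ δ
  calc echoquet n δ univ (dyadicSum K M w)
      ≤ ∫⁻ t in Ioi 0, ∑' km, (dyadicLayer K M w km.1 km.2).indicator (fun _ => c km) t :=
        setLIntegral_mono' measurableSet_Ioi fun t ht => by
          simpa only [sep_univ] using hContent_setOf_lt_dyadicSum_le K M w hn hδ hA ht
    _ = ∑' km, c km * volume (dyadicLayer K M w km.1 km.2 ∩ Ioi 0) := by
        rw [lintegral_tsum fun km =>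
          (measurable_const.indicator (measurableSet_dyadicLayer K M w _ _)).aemeasurable]
        refine tsum_congr fun km => ?_
        rw [lintegral_indicator_const (measurableSet_dyadicLayer K M w _ _),
          Measure.restrict_apply (measurableSet_dyadicLayer K M w _ _)]
    _ ≤ ∑' km, c km * ∑' i, if (K i, M i) = km then w i else 0 :=
        ENNReal.tsum_le_tsum fun km => by gcongr; exact volume_dyadicLayer_inter_Ioi_le K M w _ _
    _ = ∑' i, c (K i, M i) * w i := by
        simp_rw [← ENNReal.tsum_mul_left, mul_ite, mul_zero]
        rw [ENNReal.tsum_comm]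
        exact tsum_congr fun i => tsum_ite_eq' _ _
    _ = (n : ℝ≥0∞) ^ δ * A := by
        rw [← ENNReal.tsum_mul_left]
        refine tsum_congr fun i => ?_
        simp only [c, ENNReal.coe_mul, ENNReal.coe_natCast, ENNReal.coe_zpow two_ne_zero,
          ENNReal.mul_rpow_of_nonneg _ _ hδ.le]
        push_cast
        ring

end DyadicSum

section BallSum

variable {n : ℕ} {δ : ℝ} {ι : Type*} (c : ι → EuclideanSpace ℝ (Fin n)) (r : ι → ℝ≥0)
  (w : ι → ℝ≥0∞)

noncomputable def ballSum (x : EuclideanSpace ℝ (Fin n)) : ℝ≥0∞ :=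
  ∑' i, (ball (c i) (r i)).indicator (fun _ => w i) x

lemma exists_lt_two_zpow_le_two_mul {s : ℝ≥0} (hs : s ≠ 0) :
    ∃ k : ℤ, s < 2 ^ k ∧ 2 ^ k ≤ 2 * s := by
  obtain ⟨j, hj₁, hj₂⟩ := NNReal.exists_mem_Ico_zpow hs one_lt_two
  exact ⟨j + 1, hj₂, by rw [zpow_add_one₀ two_ne_zero, mul_comm]; gcongr⟩

/-- A ball of radius `r < 2 ^ k` is covered by the `3 ^ n` dyadic cubes of side `2 ^ k`
neighbouring the cube of its centre. -/
lemma ballSum_le_dyadicSum {k : ι → ℤ} (hk : ∀ i, r i ≠ 0 → (r i : ℝ) < 2 ^ k i)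
    (x : EuclideanSpace ℝ (Fin n)) :
    ballSum c r w x ≤ dyadicSum (fun p : ι × (Fin n → Fin 3) => k p.1)
      (fun p => dyadicIndex (k p.1) (c p.1) + fun l => (p.2 l : ℤ) - 1)
      (fun p => if r p.1 = 0 then 0 else w p.1) x := by
  rw [dyadicSum, ENNReal.tsum_prod']
  refine ENNReal.tsum_le_tsum fun i => ?_
  by_cases hx : x ∈ ball (c i) (r i)
  · have hr : r i ≠ 0 := by
      rintro h
      simp [h] at hx
    obtain ⟨j, hj⟩ := exists_dyadicIndex_eq_of_dist_lt ((mem_ball.1 hx).trans (hk i hr))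
    refine le_trans ?_ (ENNReal.le_tsum j)
    simp [hj, hr, hx]
  · simp [hx]

theorem echoquet_univ_ballSum_le (hn : n ≠ 0) (hδ : 0 < δ) [Countable ι] :
    echoquet n δ univ (ballSum c r w)
      ≤ 3 ^ n * (2 * n : ℝ≥0∞) ^ δ * ∑' i, w i * (r i : ℝ≥0∞) ^ δ := by
  have hscale : ∀ i, ∃ k : ℤ, r i ≠ 0 → r i < 2 ^ k ∧ 2 ^ k ≤ 2 * r i := fun i => by
    by_cases h : r i = 0
    · exact ⟨0, fun h' => absurd h h'⟩
    · obtain ⟨k, hk⟩ := exists_lt_two_zpow_le_two_mul h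
      exact ⟨k, fun _ => hk⟩
  choose k hk using hscale
  set W : ι → ℝ≥0∞ := fun i => if r i = 0 then 0 else w i
  have hcost : ∀ i, W i * ((2 : ℝ≥0∞) ^ k i) ^ δ ≤ 2 ^ δ * (w i * (r i : ℝ≥0∞) ^ δ) := fun i => by
    by_cases hr : r i = 0
    · simp [W, hr]
    have h2k : ((2 : ℝ≥0∞) ^ k i) ≤ 2 * r i := by
      rw [← ENNReal.coe_ofNat, ← ENNReal.coe_zpow two_ne_zero, ← ENNReal.coe_mul,
        ENNReal.coe_le_coe]
      exact (hk i hr).2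
    calc W i * ((2 : ℝ≥0∞) ^ k i) ^ δ ≤ w i * (2 * r i : ℝ≥0∞) ^ δ := by
          simp only [W, if_neg hr]; gcongr
      _ = 2 ^ δ * (w i * (r i : ℝ≥0∞) ^ δ) := by rw [ENNReal.mul_rpow_of_nonneg _ _ hδ.le]; ring
  calc echoquet n δ univ (ballSum c r w)
      ≤ echoquet n δ univ (dyadicSum (fun p : ι × (Fin n → Fin 3) => k p.1)
          (fun p => dyadicIndex (k p.1) (c p.1) + fun l => (p.2 l : ℤ) - 1) fun p => W p.1) :=
        echoquet_mono subset_rfl fun x _ =>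
          ballSum_le_dyadicSum c r w (fun i hr => by exact_mod_cast (hk i hr).1) x
    _ ≤ (n : ℝ≥0∞) ^ δ * ∑' p : ι × (Fin n → Fin 3), W p.1 * ((2 : ℝ≥0∞) ^ k p.1) ^ δ :=
        echoquet_univ_dyadicSum_le _ _ _ hn hδ
    _ = (n : ℝ≥0∞) ^ δ * ∑' i, 3 ^ n * (W i * ((2 : ℝ≥0∞) ^ k i) ^ δ) := by
        simp [ENNReal.tsum_prod']
    _ ≤ (n : ℝ≥0∞) ^ δ * ∑' i, 3 ^ n * (2 ^ δ * (w i * (r i : ℝ≥0∞) ^ δ)) := by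
        gcongr _ * ∑' i, _ * ?_ with i
        exact hcost i
    _ = 3 ^ n * (2 * n : ℝ≥0∞) ^ δ * ∑' i, w i * (r i : ℝ≥0∞) ^ δ := by
        rw [ENNReal.tsum_mul_left, ENNReal.tsum_mul_left, ENNReal.mul_rpow_of_nonneg _ _ hδ.le]
        ring

end BallSum

section LevelSets

variable {n : ℕ} {δ : ℝ}

lemma le_tsum_two_zpow (v : ℝ≥0∞) :
    v ≤ ∑' k : ℤ, if 2 ^ (k + 1) < v then (2 : ℝ≥0∞) ^ (k + 2) else 0 := by
  set S := ∑' k : ℤ, if 2 ^ (k + 1) < v then (2 : ℝ≥0∞) ^ (k + 2) else 0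
  by_contra! hlt
  obtain ⟨u, hSu, huv⟩ := exists_between hlt
  obtain ⟨j, hj₁, hj₂⟩ := ENNReal.exists_mem_Ico_zpow (pos_of_gt hSu).ne' huv.ne_top
    ENNReal.one_lt_two ENNReal.ofNat_ne_top
  obtain ⟨k, rfl⟩ : ∃ k, j = k + 1 := ⟨j - 1, by ring⟩
  have hterm : (2 : ℝ≥0∞) ^ (k + 2) ≤ S :=
    le_of_eq_of_le (if_pos (hj₁.trans_lt huv)).symm (ENNReal.le_tsum k)
  rw [add_assoc, one_add_one_eq_two] at hj₂
  exact (hSu.trans hj₂).not_ge hterm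

lemma ofReal_two_zpow (k : ℤ) : ENNReal.ofReal (2 ^ k) = 2 ^ k := by
  rw [← ENNReal.coe_ofNat, ← ENNReal.coe_zpow two_ne_zero, ← ENNReal.ofReal_coe_nnreal,
    NNReal.coe_zpow, NNReal.coe_ofNat]

lemma two_zpow_mul_hContent_le_setLIntegral (Ω : Set (EuclideanSpace ℝ (Fin n)))
    (f : EuclideanSpace ℝ (Fin n) → ℝ≥0∞) (k : ℤ) :
    2 ^ k * hContent n δ {x ∈ Ω | 2 ^ (k + 1) < f x}
      ≤ ∫⁻ t in Ioc (2 ^ k) (2 ^ (k + 1)), hContent n δ {x ∈ Ω | ENNReal.ofReal t < f x} := by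
  calc 2 ^ k * hContent n δ {x ∈ Ω | 2 ^ (k + 1) < f x}
      = ∫⁻ _ in Ioc ((2 : ℝ) ^ k) (2 ^ (k + 1)), hContent n δ {x ∈ Ω | 2 ^ (k + 1) < f x} := by
        rw [setLIntegral_const, Real.volume_Ioc, zpow_add_one₀ two_ne_zero, mul_two,
          add_sub_cancel_right, ofReal_two_zpow, mul_comm]
    _ ≤ _ := by
        refine setLIntegral_mono' measurableSet_Ioc fun t ht => hContent_mono fun x hx => ?_
        refine ⟨hx.1, lt_of_le_of_lt ?_ hx.2⟩
        rw [← ofReal_two_zpow]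
        exact ENNReal.ofReal_le_ofReal ht.2

lemma tsum_two_zpow_mul_hContent_le (Ω : Set (EuclideanSpace ℝ (Fin n)))
    (f : EuclideanSpace ℝ (Fin n) → ℝ≥0∞) :
    ∑' k : ℤ, 2 ^ k * hContent n δ {x ∈ Ω | 2 ^ (k + 1) < f x} ≤ echoquet n δ Ω f := by
  set I : ℤ → Set ℝ := fun k => Ioc (2 ^ k) (2 ^ (k + 1))
  have hdisj : Pairwise (Function.onFun Disjoint I) := by
    have hmono : Monotone fun k : ℤ => (2 : ℝ) ^ k := zpow_right_mono₀ one_le_two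
    simpa only [Order.succ_eq_add_one] using hmono.pairwise_disjoint_on_Ioc_succ
  have hsub : (⋃ k, I k) ⊆ Ioi 0 := iUnion_subset fun k _ ht => (zpow_pos two_pos k).trans ht.1
  calc ∑' k : ℤ, 2 ^ k * hContent n δ {x ∈ Ω | 2 ^ (k + 1) < f x}
      ≤ ∑' k, ∫⁻ t in I k, hContent n δ {x ∈ Ω | ENNReal.ofReal t < f x} :=
        ENNReal.tsum_le_tsum (two_zpow_mul_hContent_le_setLIntegral Ω f)
    _ = ∫⁻ t in ⋃ k, I k, hContent n δ {x ∈ Ω | ENNReal.ofReal t < f x} :=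
        (lintegral_iUnion (fun _ => measurableSet_Ioc) hdisj _).symm
    _ ≤ echoquet n δ Ω f := lintegral_mono_set hsub

end LevelSets

section Assembly

variable {n : ℕ} {δ : ℝ}

lemma tsum_le_ballSum_of_levelSets_subset {Ω : Set (EuclideanSpace ℝ (Fin n))}
    {f : ℕ → EuclideanSpace ℝ (Fin n) → ℝ≥0∞} {c : ℕ → ℤ → ℕ → EuclideanSpace ℝ (Fin n)}
    {r : ℕ → ℤ → ℕ → ℝ≥0}
    (hcov : ∀ i k, {x ∈ Ω | 2 ^ (k + 1) < f i x} ⊆ ⋃ j, ball (c i k j) (r i k j))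
    {x : EuclideanSpace ℝ (Fin n)} (hx : x ∈ Ω) :
    ∑' i, f i x ≤ ballSum (fun p : ℕ × ℤ × ℕ => c p.1 p.2.1 p.2.2) (fun p => r p.1 p.2.1 p.2.2)
      (fun p => 2 ^ (p.2.1 + 2)) x := by
  rw [ballSum, ENNReal.tsum_prod']
  refine ENNReal.tsum_le_tsum fun i => (le_tsum_two_zpow (f i x)).trans ?_
  rw [ENNReal.tsum_prod']
  refine ENNReal.tsum_le_tsum fun k => ?_
  split_ifs with hk
  · obtain ⟨j, hj⟩ := mem_iUnion.1 (hcov i k ⟨hx, hk⟩)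
    refine le_of_eq_of_le ?_ (ENNReal.le_tsum j)
    exact (indicator_of_mem hj fun _ => (2 : ℝ≥0∞) ^ (k + 2)).symm
  · exact zero_le

lemma exists_ballSum_of_tsum_echoquet_ne_top {Ω : Set (EuclideanSpace ℝ (Fin n))}
    {f : ℕ → EuclideanSpace ℝ (Fin n) → ℝ≥0∞} (hf : ∑' i, echoquet n δ Ω (f i) ≠ ⊤)
    {ε : ℝ≥0∞} (hε : ε ≠ 0) :
    ∃ (c : ℕ × ℤ × ℕ → EuclideanSpace ℝ (Fin n)) (r : ℕ × ℤ × ℕ → ℝ≥0) (w : ℕ × ℤ × ℕ → ℝ≥0∞),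
      (∀ x ∈ Ω, ∑' i, f i x ≤ ballSum c r w x) ∧
        ∑' p, w p * (r p : ℝ≥0∞) ^ δ ≤ 4 * ∑' i, echoquet n δ Ω (f i) + ε := by
  obtain ⟨η, hη, hηε⟩ := ENNReal.exists_pos_tsum_mul_lt_of_countable hε
    (fun ik : ℕ × ℤ => (2 : ℝ≥0∞) ^ (ik.2 + 2))
    fun _ => ENNReal.zpow_ne_top two_ne_zero ENNReal.ofNat_ne_top _
  set L : ℕ → ℤ → Set (EuclideanSpace ℝ (Fin n)) := fun i k => {x ∈ Ω | 2 ^ (k + 1) < f i x}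
  have hL : ∀ i k, hContent n δ (L i k) ≠ ⊤ := fun i k htop => by
    have h : 2 ^ k * hContent n δ (L i k) ≤ ∑' i, echoquet n δ Ω (f i) :=
      (ENNReal.le_tsum k).trans ((tsum_two_zpow_mul_hContent_le Ω (f i)).trans (ENNReal.le_tsum i))
    rw [htop, ENNReal.mul_top (ENNReal.zpow_pos two_ne_zero ENNReal.ofNat_ne_top k).ne'] at h
    exact hf (top_le_iff.1 h)
  have hcover : ∀ i k, ∃ (c : ℕ → EuclideanSpace ℝ (Fin n)) (r : ℕ → ℝ≥0),
      L i k ⊆ ⋃ j, ball (c j) (r j) ∧ ∑' j, (r j : ℝ≥0∞) ^ δ < hContent n δ (L i k) + η (i, k) :=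
    fun i k => exists_tsum_rpow_lt_of_hContent_lt
      (ENNReal.lt_add_right (hL i k) (ENNReal.coe_ne_zero.2 (hη (i, k)).ne'))
  choose c r hcov hsum using hcover
  have h4 : ∀ k : ℤ, (2 : ℝ≥0∞) ^ (k + 2) = 4 * 2 ^ k := fun k => by
    rw [ENNReal.zpow_add two_ne_zero ENNReal.ofNat_ne_top, mul_comm]
    norm_num
  refine ⟨_, _, _, fun x hx => tsum_le_ballSum_of_levelSets_subset hcov hx, ?_⟩
  calc ∑' p : ℕ × ℤ × ℕ, 2 ^ (p.2.1 + 2) * (r p.1 p.2.1 p.2.2 : ℝ≥0∞) ^ δ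
      = ∑' (i : ℕ) (k : ℤ), 2 ^ (k + 2) * ∑' j, (r i k j : ℝ≥0∞) ^ δ := by
        simp_rw [ENNReal.tsum_prod', ENNReal.tsum_mul_left]
    _ ≤ ∑' (i : ℕ) (k : ℤ), (4 * (2 ^ k * hContent n δ (L i k)) + 2 ^ (k + 2) * η (i, k)) := by
        gcongr with i k
        calc 2 ^ (k + 2) * ∑' j, (r i k j : ℝ≥0∞) ^ δ
            ≤ 2 ^ (k + 2) * (hContent n δ (L i k) + η (i, k)) := by gcongr; exact (hsum i k).le
          _ = _ := by rw [h4]; ring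
    _ = 4 * ∑' (i : ℕ) (k : ℤ), 2 ^ k * hContent n δ (L i k)
          + ∑' ik : ℕ × ℤ, 2 ^ (ik.2 + 2) * (η ik : ℝ≥0∞) := by
        simp_rw [ENNReal.tsum_add, ENNReal.tsum_mul_left, ENNReal.tsum_prod']
    _ ≤ 4 * ∑' i, echoquet n δ Ω (f i) + ε := by
        gcongr with i
        exact tsum_two_zpow_mul_hContent_le Ω (f i)

end Assembly

/-- countable quasi-subadditivity of the Choquet integral w.r.t. the Hausdorff
content. For `0 < δ ≤ n` there is `c = c(n)` such that for every open `Ω ⊆ ℝⁿ` and every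
sequence `fᵢ : Ω → [0, ∞]`,
`∫_Ω (∑ᵢ fᵢ) dH^δ_∞ ≤ c ∑ᵢ ∫_Ω fᵢ dH^δ_∞`. -/
theorem choquet_countably_quasi_subadditive (n : ℕ) (hn : 2 ≤ n) (δ : ℝ)
    (hδ0 : 0 < δ) (hδn : δ ≤ (n : ℝ)) :
    ∃ c : ℝ≥0, 0 < c ∧
      ∀ Ω : Set (EuclideanSpace ℝ (Fin n)), IsOpen Ω →
        ∀ f : ℕ → EuclideanSpace ℝ (Fin n) → ℝ≥0∞,
          echoquet n δ Ω (fun x => ∑' i, f i x) ≤ c * ∑' i, echoquet n δ Ω (f i) := by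
  have hn0 : n ≠ 0 := by omega
  refine ⟨4 * 3 ^ n * (2 * n) ^ n, by positivity, fun Ω _ f => ?_⟩
  set C : ℝ≥0∞ := 3 ^ n * (2 * n : ℝ≥0∞) ^ δ
  have hC0 : C ≠ 0 := by positivity
  have hCtop : C ≠ ⊤ := by finiteness
  have hCn : C ≤ 3 ^ n * (2 * n : ℝ≥0∞) ^ n := by
    gcongr 3 ^ n * ?_
    rw [← ENNReal.rpow_natCast]
    exact ENNReal.rpow_le_rpow_of_exponent_le (by norm_cast; omega) hδn
  set T := ∑' i, echoquet n δ Ω (f i)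
  rcases eq_or_ne T ⊤ with hT | hT
  · rw [hT, ENNReal.mul_top (by positivity)]
    exact le_top
  refine ENNReal.le_of_forall_pos_le_add fun ε hε _ => ?_
  obtain ⟨c, r, w, hdom, hcost⟩ := exists_ballSum_of_tsum_echoquet_ne_top hT
    (ENNReal.div_pos (ENNReal.coe_ne_zero.2 hε.ne') hCtop).ne'
  calc echoquet n δ Ω (fun x => ∑' i, f i x) ≤ echoquet n δ univ (ballSum c r w) :=
        echoquet_mono (subset_univ Ω) hdom
    _ ≤ C * ∑' p, w p * (r p : ℝ≥0∞) ^ δ := echoquet_univ_ballSum_le c r w hn0 hδ0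
    _ ≤ C * (4 * T + ε / C) := by gcongr
    _ = 4 * C * T + ε := by rw [mul_add, ENNReal.mul_div_cancel hC0 hCtop]; ring
    _ ≤ 4 * (3 ^ n * (2 * n) ^ n) * T + ε := by gcongr
    _ = ((4 * 3 ^ n * (2 * n) ^ n : ℝ≥0) : ℝ≥0∞) * T + ε := by push_cast; ring
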